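/- Let m ∈ ℕ, m ≥ 1. Then for every integer n ≥ 0, ∫_0^∞ x^n e^{−x^{1+1/m}} dx ≤ D · Π_{j=1}^{⌊n·m/(m+1)⌋} ( n + 1 − j(1 + 1/m) ), where D = max_{l=0,…,m} ∫_0^∞ x^{l − ⌊l·m/(m+1)⌋·(m+1)/m} e^{−x^{1+1/m}} dx is a finite constant independent of n. -/

import Mathlib

open MeasureTheory ProbabilityTheory Filter
open scoped BigOperators Nat Real

/-- Non-normalised Hermite polynomial `H n x = (-1)^n e^{x²/2} (d/dx)^n e^{-x²/2}`. -/
noncomputable def H (n : ℕ) (x : ℝ) : ℝ :=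
  (-1 : ℝ) ^ n * Real.exp (x ^ 2 / 2) * (deriv^[n] fun y : ℝ => Real.exp (-(y ^ 2) / 2)) x

/-- Characteristic function of a random variable `Y` under `P`. -/
noncomputable def charFn {Ω : Type*} [MeasurableSpace Ω] (P : Measure Ω) (Y : Ω → ℝ)
    (s : ℝ) : ℂ :=
  ∫ ω, Complex.exp (Complex.I * s * Y ω) ∂P

/-- Cumulant of order `k`: `γ_k = i^{-k} [d^k/ds^k log v_Y(s)]_{s=0}`. -/
noncomputable def cumulant {Ω : Type*} [MeasurableSpace Ω] (P : Measure Ω) (Y : Ω → ℝ)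
    (k : ℕ) : ℂ :=
  iteratedDeriv k (fun s : ℝ => Complex.log (charFn P Y s)) 0 / Complex.I ^ k

/-- `V_Y = √(E Y²)`. -/
noncomputable def Vr {Ω : Type*} [MeasurableSpace Ω] (P : Measure Ω) (Y : Ω → ℝ) : ℝ :=
  Real.sqrt (∫ ω, (Y ω) ^ 2 ∂P)

/-- Nonnegative integer solutions of `k₁ + 2k₂ + ⋯ + ν k_ν = ν`. -/
def sols (ν : ℕ) : Finset (Fin ν → ℕ) :=
  (Fintype.piFinset fun _ => Finset.range (ν + 1)).filter fun k => ∑ i, (i.1 + 1) * k i = ν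

/-- Edgeworth correction term `Q_ν^Y`. -/
noncomputable def Q {Ω : Type*} [MeasurableSpace Ω] (P : Measure Ω) (Y : Ω → ℝ)
    (ν : ℕ) (x : ℝ) : ℝ :=
  -(Real.sqrt (2 * Real.pi))⁻¹ * Real.exp (-(x ^ 2) / 2) *
    ∑ k ∈ sols ν, H (ν + 2 * (∑ j, k j) - 1) x *
      ∏ m : Fin ν, (1 / (Nat.factorial (k m) : ℝ)) *
        ((cumulant P Y (m.1 + 3)).re /
          ((Nat.factorial (m.1 + 3) : ℝ) * (Vr P Y) ^ (m.1 + 3))) ^ (k m)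

/-- A Lévy process: starts at 0, has stationary and independent increments, and is
stochastically continuous. -/
structure IsLevyProcess {Ω : Type*} [MeasurableSpace Ω] (P : Measure Ω)
    (X : ℝ → Ω → ℝ) : Prop where
  meas : ∀ t, Measurable (X t)
  init : ∀ᵐ ω ∂P, X 0 ω = 0
  stat : ∀ s t : ℝ, 0 ≤ s → 0 ≤ t →
    IdentDistrib (fun ω => X (s + t) ω - X s ω) (X t) P P
  indep : ∀ (n : ℕ) (t : Fin (n + 1) → ℝ), (∀ i, 0 ≤ t i) → Monotone t →
    iIndepFun
      (fun i : Fin n => fun ω => X (t i.succ) ω - X (t i.castSucc) ω) P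
  stochCont : ∀ t : ℝ, 0 ≤ t → ∀ ε : ℝ, 0 < ε →
    Tendsto (fun s => P {ω | ε < |X s ω - X t ω|}) (nhds t) (nhds 0)

/-- Standard normal cumulative distribution function. -/
noncomputable def Phi (x : ℝ) : ℝ :=
  ∫ y in Set.Iic x, (Real.sqrt (2 * Real.pi))⁻¹ * Real.exp (-(y ^ 2) / 2)

/-- Cramér's condition: `limsup_{|s|→∞} |v_Y(s)| < 1`. -/
def CramerCond {Ω : Type*} [MeasurableSpace Ω] (P : Measure Ω) (Y : Ω → ℝ) : Prop :=
  limsup (fun s => ‖charFn P Y s‖) (cocompact ℝ) < 1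

/-- `X` has Lévy–Khinchine characteristic triplet `(σ², ρ, μ)`. -/
def HasLevyTriplet {Ω : Type*} [MeasurableSpace Ω] (P : Measure Ω) (X : ℝ → Ω → ℝ)
    (σ2 ρ : ℝ) (μ : Measure ℝ) : Prop :=
  μ {0} = 0 ∧ (∫⁻ x, ENNReal.ofReal (min (x ^ 2) 1) ∂μ) < ⊤ ∧
    ∀ t : ℝ, 0 ≤ t → ∀ s : ℝ,
      charFn P (X t) s =
        Complex.exp ((t : ℂ) * (-(σ2 * s ^ 2 : ℝ) / 2 + Complex.I * ρ * s +
          ∫ x, (Complex.exp (Complex.I * s * x) - 1 -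
            Complex.I * s * x * ({y : ℝ | |y| ≤ 1}.indicator (fun _ => (1 : ℂ)) x)) ∂μ))

/-- The Lévy measure is concentrated on a bounded interval. -/
def BddLevyMeasure (μ : Measure ℝ) : Prop :=
  ∃ R : ℝ, μ {x | R < |x|} = 0

/-!
By `∫₀^∞ x^a e^{-x^p} dx = Γ((a+1)/p) / p`, lowering the exponent `a` by `p` divides the
integral by `(a + 1 - p) / p`. With `p = (m+1)/m ≥ 1`, lowering `x^n` by `p` exactly
`⌊nm/(m+1)⌋` times lands on the exponent attached to `n mod (m+1)` in `D`, and each factor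
`(n + 1 - jp)/p` is at most `n + 1 - jp`.
-/

namespace Real

theorem Gamma_eq_prod_Icc_mul_Gamma_sub (K : ℕ) {s : ℝ} (hs : (K : ℝ) < s) :
    Gamma s = (∏ j ∈ Finset.Icc 1 K, (s - j)) * Gamma (s - K) := by
  induction K with
  | zero => simp
  | succ K ih =>
    push_cast at hs
    have hstep : Gamma (s - K) = (s - (K + 1)) * Gamma (s - (K + 1)) := by
      rw [← Gamma_add_one (by linarith)]
      ring_nf
    rw [ih (by linarith), Finset.prod_Icc_succ_top (by omega), hstep]
    push_cast
    ring

end Real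

theorem integral_rpow_mul_exp_neg_rpow_eq_prod_mul {p a : ℝ} (hp : 0 < p) {K : ℕ}
    (hK : (K : ℝ) * p < a + 1) :
    ∫ x in Set.Ioi (0 : ℝ), x ^ a * Real.exp (-(x ^ p)) =
      (∏ j ∈ Finset.Icc 1 K, ((a + 1 - j * p) / p)) *
        ∫ x in Set.Ioi (0 : ℝ), x ^ (a - K * p) * Real.exp (-(x ^ p)) := by
  have hKp : 0 ≤ (K : ℝ) * p := by positivity
  rw [integral_rpow_mul_exp_neg_rpow hp (by linarith),
    integral_rpow_mul_exp_neg_rpow hp (by linarith),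
    Real.Gamma_eq_prod_Icc_mul_Gamma_sub K (by rwa [lt_div_iff₀ hp])]
  have hshift : (a - K * p + 1) / p = (a + 1) / p - K := by field_simp; ring
  have hfactor : ∀ j ∈ Finset.Icc 1 K, (a + 1 - j * p) / p = (a + 1) / p - j := by
    intro j _
    field_simp
  rw [hshift, Finset.prod_congr rfl hfactor]
  ring

theorem Nat.mul_div_succ_eq_mod_add_div_mul (n m : ℕ) :
    n * m / (m + 1) = n % (m + 1) * m / (m + 1) + n / (m + 1) * m := by
  conv_lhs => rw [← Nat.mod_add_div n (m + 1)]
  rw [add_mul, mul_right_comm, mul_assoc, Nat.add_mul_div_left _ _ m.succ_pos, mul_comm m]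

theorem natCast_sub_mul_div_succ_mul_eq_mod {m : ℕ} (hm : m ≠ 0) (n : ℕ) :
    (n : ℝ) - ((n * m / (m + 1) : ℕ) : ℝ) * (((m : ℝ) + 1) / m) =
      ((n % (m + 1) : ℕ) : ℝ) -
        ((n % (m + 1) * m / (m + 1) : ℕ) : ℝ) * (((m : ℝ) + 1) / m) := by
  have hn : (n : ℝ) = (n % (m + 1) : ℕ) + (n / (m + 1) : ℕ) * ((m : ℝ) + 1) := by
    exact_mod_cast (Nat.mod_add_div' n (m + 1)).symm
  rw [Nat.mul_div_succ_eq_mod_add_div_mul, hn]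
  push_cast
  field_simp
  ring

theorem natCast_mul_div_succ_mul_le {m : ℕ} (hm : m ≠ 0) (n : ℕ) :
    ((n * m / (m + 1) : ℕ) : ℝ) * (((m : ℝ) + 1) / m) ≤ n := by
  rw [mul_div_assoc', div_le_iff₀ (by positivity)]
  exact_mod_cast Nat.div_mul_le_self (n * m) (m + 1)

theorem integral_pow_mul_exp_bound (m : ℕ) (hm : 1 ≤ m) (n : ℕ) :
    ∫ x in Set.Ioi (0 : ℝ), x ^ n * Real.exp (-(x ^ ((1 : ℝ) + 1 / m))) ≤
      ((Finset.range (m + 1)).sup' ⟨0, Finset.mem_range.2 (Nat.succ_pos m)⟩ fun l =>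
          ∫ x in Set.Ioi (0 : ℝ),
            x ^ ((l : ℝ) - ((l * m / (m + 1) : ℕ) : ℝ) * (((m : ℝ) + 1) / m)) *
              Real.exp (-(x ^ ((1 : ℝ) + 1 / m)))) *
        ∏ j ∈ Finset.Icc 1 (n * m / (m + 1)),
          ((n : ℝ) + 1 - (j : ℝ) * (1 + 1 / (m : ℝ))) := by
  have hm0 : m ≠ 0 := by omega
  set p : ℝ := 1 + 1 / m
  have hp : p = ((m : ℝ) + 1) / m := by rw [add_div, div_self (Nat.cast_ne_zero.2 hm0)]
  have hp1 : 1 ≤ p := le_add_of_nonneg_right (by positivity)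
  set K := n * m / (m + 1)
  have hKp : (K : ℝ) * p ≤ n := hp ▸ natCast_mul_div_succ_mul_le hm0 n
  have hfactor : ∀ j ∈ Finset.Icc 1 K, 0 ≤ (n : ℝ) + 1 - j * p := by
    intro j hj
    have : (j : ℝ) * p ≤ K * p := by gcongr; exact_mod_cast (Finset.mem_Icc.1 hj).2
    linarith
  have hexponent : (n : ℝ) - K * p = ((n % (m + 1) : ℕ) : ℝ) -
      ((n % (m + 1) * m / (m + 1) : ℕ) : ℝ) * (((m : ℝ) + 1) / m) := by
    rw [hp]
    exact natCast_sub_mul_div_succ_mul_eq_mod hm0 n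
  simp_rw [← Real.rpow_natCast _ n]
  rw [integral_rpow_mul_exp_neg_rpow_eq_prod_mul (K := K) (by positivity) (by linarith),
    hexponent, mul_comm _ (∏ _ ∈ _, _)]
  refine mul_le_mul ?_ ?_ ?_ (Finset.prod_nonneg hfactor)
  · exact Finset.prod_le_prod (fun j hj => div_nonneg (hfactor j hj) (by positivity))
      fun j hj => div_le_self (hfactor j hj) hp1
  · exact Finset.le_sup'_of_le _ (Finset.mem_range.2 (n.mod_lt m.add_one_pos)) le_rfl
  · exact setIntegral_nonneg measurableSet_Ioi fun x (hx : 0 < x) => by positivity
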